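/- Fix α ∈ (0,1/2), δ ∈ (0,1), integers 1 ≤ N_P < N_A, and a real μ_gap satisfying μ_gap ≥ 3·√(2·log(1/δ)) + 7·√(2·log(e·N_A/N_P)) + π/(2·N_P). Let X_1, …, X_{N_A} be independent standard Gaussians (no true improvement, μ = 0). Then with probability at least 1 − δ, for every subset S ⊆ {1,…,N_A} of size N_P, writing μ̂_S = (1/N_P)·Σ_{i∈S} X_i, one has Φ̄((μ̂_S − μ_gap)·√N_P) > α; that is, no choice of published datasets can achieve p-value at most α for the minimum-innovation test with gap μ_gap. -/

import Mathlib

/-!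
`Φ̄ ≥ 1/2` on `(-∞, 0]`, so since `α < 1/2` a subset `S` can reach p-value `≤ α` only if
`∑_{i ∈ S} X_i ≥ N_P μ_gap`. The standard Gaussians are 1-sub-Gaussian, so by Hoeffding's
inequality each such event has probability at most `exp (-N_P μ_gap² / 2)`. A union bound over the
`C(N_A, N_P) ≤ (e N_A / N_P)^N_P` subsets and the lower bound on `μ_gap` make the total at most `δ`.
-/

open MeasureTheory ProbabilityTheory

/-- The standard normal survival function `Φ̄(x) = ∫_x^∞ (1/√(2π)) exp(-t²/2) dt`. -/
noncomputable def Phibar (x : ℝ) : ℝ :=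
  ∫ t in Set.Ioi x, (Real.sqrt (2 * Real.pi))⁻¹ * Real.exp (-t ^ 2 / 2)

open Real Finset

lemma Phibar_zero : Phibar 0 = 1 / 2 := by
  have h : (fun t : ℝ => (√(2 * π))⁻¹ * exp (-t ^ 2 / 2))
      = fun t => (√(2 * π))⁻¹ * exp (-(1 / 2) * t ^ 2) := by
    ext t; ring_nf
  rw [Phibar, h, integral_const_mul, integral_gaussian_Ioi, div_div_eq_mul_div, div_one,
    mul_comm 2 π]
  field_simp

lemma one_half_le_Phibar_of_nonpos {x : ℝ} (hx : x ≤ 0) : 1 / 2 ≤ Phibar x := by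
  rw [← Phibar_zero]
  refine setIntegral_mono_set ?_ (ae_of_all _ fun t => by positivity)
    (Set.Ioi_subset_Ioi hx).eventuallyLE
  have h := (integrable_exp_neg_mul_sq (by norm_num : (0 : ℝ) < 1 / 2)).const_mul (√(2 * π))⁻¹
  refine (h.congr (ae_of_all _ fun t => ?_)).integrableOn
  ring_nf

lemma Nat.choose_le_exp_one_mul_div_pow (n k : ℕ) :
    (n.choose k : ℝ) ≤ (exp 1 * n / k) ^ k := by
  have hk : (0 : ℝ) < (k : ℝ) ^ k := by
    rcases k.eq_zero_or_pos with rfl | hk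
    · simp
    · positivity
  have hfac : (0 : ℝ) < k.factorial := by exact_mod_cast k.factorial_pos
  have hstir : (k : ℝ) ^ k ≤ exp k * k.factorial :=
    (div_le_iff₀ hfac).mp (pow_div_factorial_le_exp _ k.cast_nonneg k)
  calc (n.choose k : ℝ) ≤ (n : ℝ) ^ k / k.factorial := Nat.choose_le_pow_div k n
    _ ≤ exp k * (n : ℝ) ^ k / (k : ℝ) ^ k := by
      rw [div_le_div_iff₀ hfac hk]
      nlinarith [mul_le_mul_of_nonneg_left hstir (by positivity : (0 : ℝ) ≤ (n : ℝ) ^ k)]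
    _ = (exp 1 * n / k) ^ k := by rw [div_pow, mul_pow, ← exp_nat_mul, mul_one]

lemma choose_mul_exp_neg_le {n k : ℕ} {δ m : ℝ} (hδ : δ ∈ Set.Ioo (0 : ℝ) 1) (hk : 1 ≤ k)
    (hkn : k ≤ n) (hm : √(2 * log (1 / δ)) + √(2 * log (exp 1 * n / k)) ≤ m) :
    (n.choose k : ℝ) * exp (-(k * m ^ 2 / 2)) ≤ δ := by
  have hk' : (1 : ℝ) ≤ k := by exact_mod_cast hk
  have hn : (1 : ℝ) ≤ n := by exact_mod_cast hk.trans hkn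
  have hL₁ : 0 ≤ log (1 / δ) := log_nonneg (one_le_one_div hδ.1 hδ.2.le)
  have hL₂ : 0 ≤ log (exp 1 * n / k) := by
    refine log_nonneg ?_
    rw [le_div_iff₀ (by positivity), one_mul]
    nlinarith [add_one_le_exp (1 : ℝ), (Nat.cast_le (α := ℝ)).mpr hkn]
  have hm_sq : 2 * log (1 / δ) + 2 * log (exp 1 * n / k) ≤ m ^ 2 := by
    have ha := sq_sqrt (by positivity : 0 ≤ 2 * log (1 / δ))
    have hb := sq_sqrt (by positivity : 0 ≤ 2 * log (exp 1 * n / k))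
    nlinarith [sqrt_nonneg (2 * log (1 / δ)), sqrt_nonneg (2 * log (exp 1 * n / k))]
  calc (n.choose k : ℝ) * exp (-(k * m ^ 2 / 2))
      ≤ exp (k * log (exp 1 * n / k)) * exp (-(k * m ^ 2 / 2)) := by
        gcongr
        rw [exp_nat_mul, exp_log (by positivity)]
        exact Nat.choose_le_exp_one_mul_div_pow n k
    _ ≤ exp (log δ) := by
        rw [← exp_add, exp_le_exp, ← neg_neg (log δ), ← log_inv, ← one_div]
        nlinarith [mul_le_mul_of_nonneg_left hm_sq (by positivity : (0 : ℝ) ≤ k)]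
    _ = δ := exp_log hδ.1

section

variable {Ω : Type*} [MeasurableSpace Ω] {μ : Measure Ω}

lemma hasSubgaussianMGF_of_map_eq_gaussianReal {X : Ω → ℝ} {v : NNReal}
    (hX : μ.map X = gaussianReal 0 v) : HasSubgaussianMGF X v μ where
  integrable_exp_mul t := by
    have hXm : AEMeasurable X μ := aemeasurable_of_map_neZero (by rw [hX]; infer_instance)
    have h := integrable_exp_mul_gaussianReal (μ := 0) (v := v) t
    rw [← hX] at h
    exact (integrable_map_measure (by fun_prop) hXm).mp h
  mgf_le t := by rw [mgf_gaussianReal hX]; simp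

lemma measure_exists_card_eq_sum_ge_le [IsFiniteMeasure μ] {ι : Type*} [Fintype ι]
    {X : ι → Ω → ℝ} (hindep : iIndepFun X μ) (hX : ∀ i, HasSubgaussianMGF (X i) 1 μ) (k : ℕ)
    {m : ℝ} (hm : 0 ≤ m) :
    μ {ω | ∃ S : Finset ι, #S = k ∧ k * m ≤ ∑ i ∈ S, X i ω}
      ≤ ENNReal.ofReal ((Fintype.card ι).choose k * exp (-(k * m ^ 2 / 2))) := by
  have htail : ∀ S : Finset ι, #S = k →
      μ {ω | k * m ≤ ∑ i ∈ S, X i ω} ≤ ENNReal.ofReal (exp (-(k * m ^ 2 / 2))) := by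
    intro S hS
    have h := HasSubgaussianMGF.measure_sum_ge_le_of_iIndepFun hindep (c := fun _ => 1) (s := S)
      (fun i _ => hX i) (ε := k * m) (by positivity)
    rw [← ofReal_measureReal]
    refine ENNReal.ofReal_le_ofReal (h.trans_eq ?_)
    rcases k.eq_zero_or_pos with rfl | hk
    · simp
    · simp only [sum_const, hS, nsmul_eq_mul, mul_one, NNReal.coe_natCast]
      field_simp
  calc μ {ω | ∃ S : Finset ι, #S = k ∧ k * m ≤ ∑ i ∈ S, X i ω}
      = μ (⋃ S ∈ powersetCard k univ, {ω | k * m ≤ ∑ i ∈ S, X i ω}) := by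
        congr 1; ext ω; simp
    _ ≤ ∑ S ∈ powersetCard k univ, μ {ω | k * m ≤ ∑ i ∈ S, X i ω} :=
        measure_biUnion_finset_le _ _
    _ ≤ #(powersetCard k (univ : Finset ι)) • ENNReal.ofReal (exp (-(k * m ^ 2 / 2))) :=
        sum_le_card_nsmul _ _ _ fun S hS => htail S (mem_powersetCard_univ.mp hS)
    _ = ENNReal.ofReal ((Fintype.card ι).choose k * exp (-(k * m ^ 2 / 2))) := by
        rw [card_powersetCard, card_univ, nsmul_eq_mul,
          ENNReal.ofReal_mul (by positivity), ENNReal.ofReal_natCast]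

lemma one_sub_le_measure_compl [IsProbabilityMeasure μ] (s : Set Ω) : 1 - μ s ≤ μ sᶜ := by
  rw [tsub_le_iff_left, ← measure_univ (μ := μ), ← Set.union_compl_self s]
  exact measure_union_le s sᶜ

end

theorem stmt3_general {Ω : Type*} [MeasureSpace Ω] [IsProbabilityMeasure (ℙ : Measure Ω)]
    (α δ μgap : ℝ) (hα : α ∈ Set.Ioo (0 : ℝ) (1 / 2)) (hδ : δ ∈ Set.Ioo (0 : ℝ) 1)
    (NP NA : ℕ) (hNP : 1 ≤ NP) (hlt : NP < NA)
    (hgap : μgap ≥ 3 * Real.sqrt (2 * Real.log (1 / δ)) +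
      7 * Real.sqrt (2 * Real.log (Real.exp 1 * NA / NP)) + Real.pi / (2 * NP))
    (X : Fin NA → Ω → ℝ)
    (hindep : iIndepFun X ℙ)
    (hdist : ∀ i, Measure.map (X i) ℙ = gaussianReal 0 1) :
    ENNReal.ofReal (1 - δ) ≤
      ℙ {ω | ∀ S : Finset (Fin NA), S.card = NP →
        Phibar (((1 / (NP : ℝ)) * ∑ i ∈ S, X i ω - μgap) * Real.sqrt NP) > α} := by
  set good := {ω | ∀ S : Finset (Fin NA), S.card = NP →
    Phibar (((1 / (NP : ℝ)) * ∑ i ∈ S, X i ω - μgap) * Real.sqrt NP) > α}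
  set bad := {ω | ∃ S : Finset (Fin NA), #S = NP ∧ NP * μgap ≤ ∑ i ∈ S, X i ω}
  have hNP' : (0 : ℝ) < NP := by exact_mod_cast hNP
  have hgap' : √(2 * log (1 / δ)) + √(2 * log (exp 1 * NA / NP)) ≤ μgap := by
    have : 0 ≤ π / (2 * NP) := by positivity
    linarith [sqrt_nonneg (2 * log (1 / δ)), sqrt_nonneg (2 * log (exp 1 * NA / NP))]
  have hbad : ℙ bad ≤ ENNReal.ofReal δ := by
    have h := measure_exists_card_eq_sum_ge_le hindep
      (fun i => hasSubgaussianMGF_of_map_eq_gaussianReal (hdist i)) NP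
      ((add_nonneg (sqrt_nonneg _) (sqrt_nonneg _)).trans hgap')
    rw [Fintype.card_fin] at h
    exact h.trans (ENNReal.ofReal_le_ofReal (choose_mul_exp_neg_le hδ hNP hlt.le hgap'))
  have hgood_compl : goodᶜ ⊆ bad := by
    intro ω hω
    simp only [good, Set.mem_compl_iff, Set.mem_ofPred_eq, not_forall, not_lt] at hω
    obtain ⟨S, hS, hp⟩ := hω
    refine ⟨S, hS, not_lt.mp fun hsum =>
      (hα.2.trans_le (one_half_le_Phibar_of_nonpos ?_)).not_ge hp⟩
    refine mul_nonpos_of_nonpos_of_nonneg ?_ (sqrt_nonneg _)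
    rw [sub_nonpos, one_div, inv_mul_le_iff₀ hNP']
    exact hsum.le
  calc ENNReal.ofReal (1 - δ) = 1 - ENNReal.ofReal δ := by
        rw [ENNReal.ofReal_sub 1 hδ.1.le, ENNReal.ofReal_one]
    _ ≤ 1 - ℙ goodᶜ := tsub_le_tsub_left ((measure_mono hgood_compl).trans hbad) 1
    _ ≤ ℙ good := by simpa using one_sub_le_measure_compl goodᶜ

/-- If the minimum-innovation gap `μ_gap` is at least
`3√(2 log(1/δ)) + 7√(2 log(e N_A/N_P)) + π/(2 N_P)`, then with probability at least `1 - δ`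
no subset of `N_P` of the `N_A` i.i.d. standard Gaussian results (no true improvement)
achieves a minimum-innovation `p`-value at most `α`. -/
theorem stmt3 {Ω : Type*} [MeasureSpace Ω] [IsProbabilityMeasure (ℙ : Measure Ω)]
    (α δ μgap : ℝ) (hα : α ∈ Set.Ioo (0 : ℝ) (1 / 2)) (hδ : δ ∈ Set.Ioo (0 : ℝ) 1)
    (NP NA : ℕ) (hNP : 1 ≤ NP) (hlt : NP < NA)
    (hgap : μgap ≥ 3 * Real.sqrt (2 * Real.log (1 / δ)) +
      7 * Real.sqrt (2 * Real.log (Real.exp 1 * NA / NP)) + Real.pi / (2 * NP))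
    (X : Fin NA → Ω → ℝ) (hmeas : ∀ i, Measurable (X i))
    (hindep : iIndepFun X ℙ)
    (hdist : ∀ i, Measure.map (X i) ℙ = gaussianReal 0 1) :
    ENNReal.ofReal (1 - δ) ≤
      ℙ {ω | ∀ S : Finset (Fin NA), S.card = NP →
        Phibar (((1 / (NP : ℝ)) * ∑ i ∈ S, X i ω - μgap) * Real.sqrt NP) > α} :=
  stmt3_general α δ μgap hα hδ NP NA hNP hlt hgap X hindep hdist
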